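/- For every n ≥ 4, the graph K_{n−3} + ε_3 has spherical dimension n − 1. -/

import Mathlib

/-- A unit-distance embedding of a simple graph `G` in `ℝⁿ`: an injective map sending
adjacent vertices to points at distance 1, such that no other vertex lies on the
closed segment between the endpoints of an edge. -/
def IsUDEmbedding {V : Type*} (G : SimpleGraph V) {n : ℕ}
    (f : V → EuclideanSpace ℝ (Fin n)) : Prop :=
  Function.Injective f ∧
  (∀ ⦃u v⦄, G.Adj u v → dist (f u) (f v) = 1) ∧
  (∀ ⦃u v⦄, G.Adj u v → ∀ w, w ≠ u → w ≠ v → f w ∉ segment ℝ (f u) (f v))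

/-- `G` has a unit-distance embedding in `ℝⁿ`. -/
def HasUDEmbedding {V : Type*} (G : SimpleGraph V) (n : ℕ) : Prop :=
  ∃ f : V → EuclideanSpace ℝ (Fin n), IsUDEmbedding G f

/-- `G` has a unit-distance embedding in `ℝⁿ` whose image lies on a sphere of radius `r`. -/
def HasSphericalEmbeddingRadius {V : Type*} (G : SimpleGraph V) (n : ℕ) (r : ℝ) : Prop :=
  ∃ f : V → EuclideanSpace ℝ (Fin n), IsUDEmbedding G f ∧
    ∃ c : EuclideanSpace ℝ (Fin n), ∀ v, dist (f v) c = r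

/-- `G` has a unit-distance embedding in `ℝⁿ` whose image lies on a sphere
of radius `0 < r < 1`. -/
def HasSphericalEmbedding {V : Type*} (G : SimpleGraph V) (n : ℕ) : Prop :=
  ∃ r : ℝ, 0 < r ∧ r < 1 ∧ HasSphericalEmbeddingRadius G n r

/-- The dimension of a graph: the least `n` such that `G` has a unit-distance
embedding in `ℝⁿ`. -/
noncomputable def graphDim {V : Type*} (G : SimpleGraph V) : ℕ :=
  sInf {n | HasUDEmbedding G n}

/-- The spherical dimension of a graph: the least `n` such that `G` has a unit-distance
embedding in `ℝⁿ` on a sphere of radius strictly between 0 and 1.  By convention the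
spherical dimension of a graph with at most one vertex is `0`. -/
noncomputable def sphericalDim {V : Type*} [Fintype V] (G : SimpleGraph V) : ℕ :=
  if Fintype.card V ≤ 1 then 0 else sInf {n | HasSphericalEmbedding G n}

/-- The join `G + H` of two graphs: disjoint union together with all edges between them. -/
def graphJoin {V W : Type*} (G : SimpleGraph V) (H : SimpleGraph W) :
    SimpleGraph (V ⊕ W) :=
  SimpleGraph.fromRel (fun x y =>
    match x, y with
    | Sum.inl a, Sum.inl b => G.Adj a b
    | Sum.inr a, Sum.inr b => H.Adj a b
    | Sum.inl _, Sum.inr _ => True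
    | Sum.inr _, Sum.inl _ => False)

/-- `H` is a minor of `G` (branch-set formulation, equivalent to being obtainable from `G`
by vertex deletions, edge deletions and edge contractions). -/
def IsMinorOf {W V : Type*} (H : SimpleGraph W) (G : SimpleGraph V) : Prop :=
  ∃ φ : W → Set V,
    (∀ w, (SimpleGraph.induce (φ w) G).Connected) ∧
    (Pairwise fun w w' => Disjoint (φ w) (φ w')) ∧
    (∀ ⦃w w'⦄, H.Adj w w' → ∃ x ∈ φ w, ∃ y ∈ φ w', G.Adj x y)

/-- `H` is a proper minor of `G`: a minor that is not isomorphic to `G`. -/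
def IsProperMinorOf {W V : Type*} (H : SimpleGraph W) (G : SimpleGraph V) : Prop :=
  IsMinorOf H G ∧ ¬ Nonempty (H ≃g G)

/-- `G` is minor minimal with respect to dimension `n`. -/
def MinorMinimalDim {V : Type*} (G : SimpleGraph V) (n : ℕ) : Prop :=
  graphDim G = n ∧
  ∀ (W : Type) [Fintype W] (H : SimpleGraph W), Nonempty W →
    IsProperMinorOf H G → graphDim H < n

/-- `G` is minor minimal with respect to spherical dimension `n`. -/
def MinorMinimalSDim {V : Type*} [Fintype V] (G : SimpleGraph V) (n : ℕ) : Prop :=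
  sphericalDim G = n ∧
  ∀ (W : Type) [Fintype W] (H : SimpleGraph W), Nonempty W →
    IsProperMinorOf H G → sphericalDim H < n

/-- The vertex type of the graph `Sₙ`. -/
def SType : ℕ → Type
  | 0 => Fin 0
  | 1 => Fin 1
  | 2 => Fin 2
  | 3 => Fin 3
  | (n + 4) => Fin (n + 1) ⊕ Fin 3

instance : (n : ℕ) → Fintype (SType n)
  | 0 => inferInstanceAs (Fintype (Fin 0))
  | 1 => inferInstanceAs (Fintype (Fin 1))
  | 2 => inferInstanceAs (Fintype (Fin 2))
  | 3 => inferInstanceAs (Fintype (Fin 3))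
  | (n + 4) => inferInstanceAs (Fintype (Fin (n + 1) ⊕ Fin 3))

/-- The graph `Sₙ`:  `S₁ = ε₁`, `S₂ = ε₂`, `S₃ = ε₃`, and `Sₙ = K_{n-3} + ε₃` for `n ≥ 4`. -/
def SGraph : (n : ℕ) → SimpleGraph (SType n)
  | 0 => ⊥
  | 1 => ⊥
  | 2 => ⊥
  | 3 => ⊥
  | (n + 4) => graphJoin (⊤ : SimpleGraph (Fin (n + 1))) (⊥ : SimpleGraph (Fin 3))


/-!
On the sphere of radius `1/√2` about the origin, two points are at unit distance exactly when
they are orthogonal. Hence `1/√2` times the orthonormal vectors `e₁, …, eₘ` (the clique) together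
with `±eₘ₊₁, eₘ₊₂` (the independent triple) embed `Kₘ + ε₃` spherically in `ℝᵐ⁺²`.

Conversely, on a sphere of radius `ρ` about `c` unit distance means `⟪x - c, y - c⟫ = ρ² - 1/2`.
So the clique vectors `xᵢ - c` have Gram matrix `(ρ² - 1/2) J + I/2` and a constant inner product
with the vectors of the triple, which forces them to be linearly independent. The differences of
the three points of the triple are orthogonal to all `m` of them, so in `ℝᵐ⁺¹` the triple is
collinear, which three distinct points of a sphere cannot be.
-/

open scoped RealInnerProductSpace
open Module

section InnerProductSpace

variable {E : Type*} [NormedAddCommGroup E] [InnerProductSpace ℝ E]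

theorem inner_sub_center_eq_of_dist_eq {x y c : E} {ρ : ℝ} (hx : dist x c = ρ)
    (hy : dist y c = ρ) : ⟪x - c, y - c⟫ = ρ ^ 2 - dist x y ^ 2 / 2 := by
  have h := norm_sub_sq_real (x - c) (y - c)
  rw [sub_sub_sub_cancel_right, ← dist_eq_norm, ← dist_eq_norm, ← dist_eq_norm, hx, hy] at h
  linarith

theorem linearIndependent_of_inner_eq {ι : Type*} [Fintype ι] {v : ι → E} {p : E} {a b : ℝ}
    (hb : b ≠ 0) (hvv : ∀ i j, i ≠ j → ⟪v i, v j⟫ = a) (hvv' : ∀ i, ⟪v i, v i⟫ = a + b)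
    (hvp : ∀ i, ⟪v i, p⟫ = a) : LinearIndependent ℝ v := by
  classical
  refine Fintype.linearIndependent_iff.2 fun g hg j => ?_
  have hp : ⟪∑ i, g i • v i, p⟫ = (∑ i, g i) * a := by
    simp only [sum_inner, real_inner_smul_left, hvp, Finset.sum_mul]
  have hvj : ∀ i, ⟪g i • v i, v j⟫ = g i * a + if i = j then g i * b else 0 := by
    intro i
    rw [real_inner_smul_left]
    split_ifs with h
    · rw [h, hvv']; ring
    · rw [hvv i j h]; ring
  have hj : ⟪∑ i, g i • v i, v j⟫ = (∑ i, g i) * a + g j * b := by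
    rw [sum_inner, Finset.sum_congr rfl fun i _ => hvj i, Finset.sum_add_distrib,
      Finset.sum_ite_eq', if_pos (Finset.mem_univ j), Finset.sum_mul]
  rw [hg, inner_zero_left] at hp hj
  exact (mul_eq_zero.1 (by linarith : g j * b = 0)).resolve_right hb

theorem collinear_of_inner_vsub_eq_zero [FiniteDimensional ℝ E] {ι : Type*} [Fintype ι]
    {v : ι → E} (hv : LinearIndependent ℝ v) (hdim : finrank ℝ E ≤ Fintype.card ι + 1)
    {s : Set E} (hs : ∀ x ∈ s, ∀ y ∈ s, ∀ i, ⟪v i, x - y⟫ = 0) : Collinear ℝ s := by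
  set K := Submodule.span ℝ (Set.range v)
  have hortho : K ⟂ vectorSpan ℝ s := by
    rw [vectorSpan_def, Submodule.isOrtho_span]
    rintro _ ⟨i, rfl⟩ _ ⟨x, hx, y, hy, rfl⟩
    exact hs x hx y hy i
  have hK := K.finrank_add_finrank_orthogonal
  rw [finrank_span_eq_card hv] at hK
  rw [collinear_iff_finrank_le_one]
  have := Submodule.finrank_mono hortho.ge
  omega

end InnerProductSpace

theorem isUDEmbedding_of_dist_eq {V : Type*} {G : SimpleGraph V} {n : ℕ}
    {f : V → EuclideanSpace ℝ (Fin n)} (hf : Function.Injective f)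
    (hadj : ∀ ⦃u v⦄, G.Adj u v → dist (f u) (f v) = 1) {c : EuclideanSpace ℝ (Fin n)} {ρ : ℝ}
    (hsph : ∀ v, dist (f v) c = ρ) : IsUDEmbedding G f := by
  refine ⟨hf, hadj, fun u v _ w hwu hwv hw => ?_⟩
  have hbtw : Sbtw ℝ (f u) (f w) (f v) :=
    ⟨mem_segment_iff_wbtw.1 hw, hf.ne hwu, hf.ne hwv⟩
  have := hbtw.dist_lt_max_dist c
  simp [hsph] at this

section Join

variable {V W : Type*} {G : SimpleGraph V} {H : SimpleGraph W}

@[simp] theorem graphJoin_adj_inl_inl {a b : V} :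
    (graphJoin G H).Adj (.inl a) (.inl b) ↔ G.Adj a b := by
  simpa [graphJoin, G.adj_comm b a] using fun h => G.ne_of_adj h

@[simp] theorem graphJoin_adj_inr_inr {a b : W} :
    (graphJoin G H).Adj (.inr a) (.inr b) ↔ H.Adj a b := by
  simpa [graphJoin, H.adj_comm b a] using fun h => H.ne_of_adj h

@[simp] theorem graphJoin_adj_inl_inr {a : V} {b : W} :
    (graphJoin G H).Adj (.inl a) (.inr b) := by
  simp [graphJoin]

@[simp] theorem graphJoin_adj_inr_inl {a : W} {b : V} :
    (graphJoin G H).Adj (.inr a) (.inl b) := by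
  simp [graphJoin]

end Join

section JoinPoints

variable {E : Type*} [NormedAddCommGroup E] [InnerProductSpace ℝ E] {m : ℕ}
  {e : Fin m ⊕ Fin 2 → E}

def joinPoints (e : Fin m ⊕ Fin 2 → E) : Fin m ⊕ Fin 3 → E :=
  Sum.elim (e ∘ Sum.inl) ![e (.inr 0), -e (.inr 0), e (.inr 1)]

theorem norm_joinPoints (he : Orthonormal ℝ e) (x : Fin m ⊕ Fin 3) : ‖joinPoints e x‖ = 1 := by
  rcases x with i | j
  · exact he.1 _
  · fin_cases j <;> simp [joinPoints, he.1 _]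

theorem inner_joinPoints_of_adj (he : Orthonormal ℝ e) {x y : Fin m ⊕ Fin 3}
    (h : (graphJoin (⊤ : SimpleGraph (Fin m)) (⊥ : SimpleGraph (Fin 3))).Adj x y) :
    ⟪joinPoints e x, joinPoints e y⟫ = 0 := by
  rcases x with i | j <;> rcases y with i' | j'
  · exact he.inner_eq_zero (by simpa using h)
  · fin_cases j' <;> simp [joinPoints, he.inner_eq_zero]
  · fin_cases j <;> simp [joinPoints, he.inner_eq_zero]
  · simp at h

theorem joinPoints_injective (he : Orthonormal ℝ e) : Function.Injective (joinPoints e) := by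
  intro x y h
  have hxy : ⟪joinPoints e x, joinPoints e y⟫ = 1 := by
    rw [h, real_inner_self_eq_norm_sq, norm_joinPoints he, one_pow]
  rcases x with i | j <;> rcases y with i' | j'
  · exact congrArg _ (Sum.inl_injective (he.linearIndependent.injective h))
  · simp [inner_joinPoints_of_adj he graphJoin_adj_inl_inr] at hxy
  · simp [inner_joinPoints_of_adj he graphJoin_adj_inr_inl] at hxy
  · fin_cases j <;> fin_cases j' <;>
      first | rfl | norm_num [joinPoints, he.inner_eq_zero, he.1 _] at hxy

theorem norm_sub_eq_sqrt_two {u v : E} (hu : ‖u‖ = 1) (hv : ‖v‖ = 1) (huv : ⟪u, v⟫ = 0) :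
    ‖u - v‖ = √2 := by
  rw [← Real.sqrt_sq (norm_nonneg _), norm_sub_sq_real, hu, hv, huv]
  norm_num

end JoinPoints

theorem hasSphericalEmbedding_join (m : ℕ) :
    HasSphericalEmbedding
      (graphJoin (⊤ : SimpleGraph (Fin m)) (⊥ : SimpleGraph (Fin 3))) (m + 2) := by
  set e : Fin m ⊕ Fin 2 → EuclideanSpace ℝ (Fin (m + 2)) :=
    EuclideanSpace.basisFun (Fin (m + 2)) ℝ ∘ finSumFinEquiv
  have he : Orthonormal ℝ e :=
    (EuclideanSpace.basisFun _ ℝ).orthonormal.comp _ finSumFinEquiv.injective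
  have hsph : ∀ x, dist ((√2)⁻¹ • joinPoints e x) 0 = (√2)⁻¹ := fun x => by
    rw [dist_zero_right, norm_smul, norm_joinPoints he, mul_one, Real.norm_eq_abs,
      abs_of_pos (by positivity)]
  refine ⟨(√2)⁻¹, by positivity, inv_lt_one_of_one_lt₀ Real.one_lt_sqrt_two,
    fun x => (√2)⁻¹ • joinPoints e x, isUDEmbedding_of_dist_eq ?_ (fun x y h => ?_) hsph, 0, hsph⟩
  · exact (smul_right_injective _ (by positivity)).comp (joinPoints_injective he)
  · rw [dist_smul₀, dist_eq_norm, norm_sub_eq_sqrt_two (norm_joinPoints he x)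
      (norm_joinPoints he y) (inner_joinPoints_of_adj he h), Real.norm_eq_abs,
      abs_of_pos (by positivity), inv_mul_cancel₀ (by positivity)]

theorem not_hasSphericalEmbeddingRadius_join {m k : ℕ} (hk : k ≤ m + 1) (ρ : ℝ) :
    ¬ HasSphericalEmbeddingRadius
      (graphJoin (⊤ : SimpleGraph (Fin m)) (⊥ : SimpleGraph (Fin 3))) k ρ := by
  rintro ⟨f, ⟨hf, hunit, -⟩, c, hsph⟩
  have hinner : ∀ ⦃x y⦄,
      (graphJoin (⊤ : SimpleGraph (Fin m)) (⊥ : SimpleGraph (Fin 3))).Adj x y →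
        ⟪f x - c, f y - c⟫ = ρ ^ 2 - 1 / 2 := fun x y h => by
    rw [inner_sub_center_eq_of_dist_eq (hsph x) (hsph y), hunit h]
    norm_num
  have hv : LinearIndependent ℝ fun i => f (.inl i) - c :=
    linearIndependent_of_inner_eq (p := f (.inr 0) - c) (b := 1 / 2) (by norm_num)
      (fun i j h => hinner (graphJoin_adj_inl_inl.2 h))
      (fun i => by rw [real_inner_self_eq_norm_sq, ← dist_eq_norm, hsph]; ring)
      (fun i => hinner graphJoin_adj_inl_inr)
  have hcol : Collinear ℝ (Set.range (f ∘ Sum.inr)) := by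
    refine collinear_of_inner_vsub_eq_zero hv (by simpa using hk) ?_
    rintro _ ⟨a, rfl⟩ _ ⟨b, rfl⟩ i
    simp only [Function.comp_apply]
    rw [← sub_sub_sub_cancel_right (f (.inr a)) (f (.inr b)) c,
      inner_sub_right, hinner graphJoin_adj_inl_inr, hinner graphJoin_adj_inl_inr, sub_self]
  have hcos : EuclideanGeometry.Cospherical (Set.range (f ∘ Sum.inr)) :=
    ⟨c, ρ, by rintro _ ⟨a, rfl⟩; exact hsph _⟩
  exact affineIndependent_iff_not_collinear.1
    (hcos.affineIndependent subset_rfl (hf.comp Sum.inr_injective)) hcol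

theorem sphericalDim_join (m : ℕ) :
    sphericalDim (graphJoin (⊤ : SimpleGraph (Fin m)) (⊥ : SimpleGraph (Fin 3))) = m + 2 := by
  rw [sphericalDim, if_neg (by simp)]
  refine IsLeast.csInf_eq ⟨hasSphericalEmbedding_join m, fun k hk => ?_⟩
  by_contra! hlt
  obtain ⟨ρ, -, -, hρ⟩ := hk
  exact not_hasSphericalEmbeddingRadius_join (by omega) ρ hρ

/-- For every `n ≥ 4`, the graph `K_{n-3} + ε₃` has spherical dimension
`n - 1`. -/
theorem stmt17 (n : ℕ) (hn : 4 ≤ n) :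
    sphericalDim
      (graphJoin (⊤ : SimpleGraph (Fin (n - 3))) (⊥ : SimpleGraph (Fin 3))) = n - 1 := by
  rw [sphericalDim_join]
  omega
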